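/- Let h(z) = ∑_{k=0}^∞ a_k z^k and g(z) = ∑_{k=1}^∞ b_k z^k be analytic on the unit disk 𝔻 with g(0) = 0, and suppose the harmonic mapping f(z) = h(z) + conj(g(z)) satisfies |f(z)| ≤ 1 for all z ∈ 𝔻 and |a_0| < 1. Then for every real p with 1 ≤ p ≤ 2, |a_0| + ∑_{k=1}^∞ (|a_k|^p + |b_k|^p)^{1/p} · r^k ≤ 1 for all r with 0 ≤ r ≤ √((1 − |a_0|)/(2^{(2/p) − 1} + 1 + (2^{(2/p) − 1} − 1)|a_0|)). Moreover, for every real p ≥ 2, the same inequality holds for all r with 0 ≤ r ≤ √((1 − |a_0|)/2). -/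

import Mathlib

open MeasureTheory AddCircle Complex ComplexConjugate Real Finset

/-!
On the circle `|z| = ρ < 1` the map `f = h + conj g` has the absolutely convergent Fourier
series `∑ a_k ρ^k e^{ikt} + ∑_{k ≥ 1} conj b_k ρ^k e^{-ikt}`, so Parseval's identity and `|f| ≤ 1`
give `|a_0|² + ∑_{k ≥ 1} (|a_k|² + |b_k|²) ρ^{2k} ≤ 1`; letting `ρ → 1` removes the weights.
Comparing the `ℓ^p` and `ℓ²` norms on `ℝ²`, `M_k = (|a_k|^p + |b_k|^p)^{1/p}` satisfies
`M_k² ≤ u (|a_k|² + |b_k|²)` with `u = 2^{2/p - 1}` for `p ≤ 2` and `u = 1` for `p ≥ 2`.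
Cauchy–Schwarz then bounds `∑ M_k r^k` by `√(u (1 - |a_0|²)) · r / √(1 - r²)`, which is at most
`1 - |a_0|` exactly when `r² (u + 1 + (u - 1)|a_0|) ≤ 1 - |a_0|`.
-/

section Parseval

variable {T : ℝ} [Fact (0 < T)]

theorem fourierCoeff_tsum_mul_fourier {c : ℤ → ℂ} (hc : Summable fun n => ‖c n‖) (m : ℤ) :
    fourierCoeff (fun t : AddCircle T => ∑' n, c n * fourier n t) m = c m := by
  have hnorm (n : ℤ) (t : AddCircle T) : ‖fourier (-m) t * (c n * fourier n t)‖ = ‖c n‖ := by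
    simp [fourier_apply, Circle.norm_coe]
  calc fourierCoeff (fun t : AddCircle T => ∑' n, c n * fourier n t) m
      = ∫ t, ∑' n, fourier (-m) t * (c n * fourier n t) ∂haarAddCircle (T := T) := by
        simp only [fourierCoeff, smul_eq_mul, tsum_mul_left]
    _ = ∑' n, ∫ t, fourier (-m) t * (c n * fourier n t) ∂haarAddCircle (T := T) := by
        refine (integral_tsum_of_summable_integral_norm (fun n => ?_) ?_).symm
        · exact (((fourier (-m)).continuous.mul
            (continuous_const.mul (fourier n).continuous))).integrable_of_hasCompactSupport
            (HasCompactSupport.of_compactSpace _)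
        · simp only [hnorm]
          simpa using hc
    _ = ∑' n, c n * fourierCoeff (fourier n : AddCircle T → ℂ) m := by
        simp only [fourierCoeff, smul_eq_mul, ← integral_const_mul, mul_left_comm]
    _ = c m := by
        simp [fourierCoeff_fourier, Pi.single_apply]

theorem hasSum_sq_norm_of_summable_norm {c : ℤ → ℂ} (hc : Summable fun n => ‖c n‖) :
    HasSum (fun n => ‖c n‖ ^ 2)
      (∫ t, ‖∑' n, c n * fourier n t‖ ^ 2 ∂(haarAddCircle (T := T))) := by
  let F : C(AddCircle T, ℂ) := ⟨fun t => ∑' n, c n * fourier n t,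
    continuous_tsum (fun n => continuous_const.mul (fourier n).continuous) hc
      fun n t => by simp [fourier_apply, Circle.norm_coe]⟩
  have hP := hasSum_sq_fourierCoeff (ContinuousMap.toLp (E := ℂ) 2 haarAddCircle ℂ F)
  simp only [fourierCoeff_toLp] at hP
  convert hP using 1
  · ext n
    exact congrArg (‖·‖ ^ 2) (fourierCoeff_tsum_mul_fourier hc n).symm
  · refine integral_congr_ae ?_
    filter_upwards [ContinuousMap.coeFn_toLp (p := 2) (𝕜 := ℂ) haarAddCircle F] with t ht
    rw [ht]
    rfl

end Parseval

theorem fourier_coe_two_pi_apply (n : ℤ) (x : ℝ) :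
    fourier n (x : AddCircle (2 * π)) = exp (n * x * I) := by
  rw [fourier_coe_apply]
  congr 1
  field_simp
  push_cast
  ring

section HarmonicDisk

variable {a b : ℕ → ℂ} {h g : ℂ → ℂ} {ρ : ℝ}

/-- The Fourier coefficients of `t ↦ h (ρ e^{it}) + conj (g (ρ e^{it}))` when `b 0 = 0`. -/
def harmonicCircleCoeff (a b : ℕ → ℂ) (ρ : ℝ) : ℤ → ℂ
  | Int.ofNat k => a k * ρ ^ k
  | Int.negSucc k => conj (b (k + 1)) * ρ ^ (k + 1)

@[simp]
theorem harmonicCircleCoeff_natCast (k : ℕ) :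
    harmonicCircleCoeff a b ρ k = a k * ρ ^ k := rfl

@[simp]
theorem harmonicCircleCoeff_neg_natCast_add_one (k : ℕ) :
    harmonicCircleCoeff a b ρ (-(k + 1)) = conj (b (k + 1)) * ρ ^ (k + 1) := rfl

theorem summable_norm_harmonicCircleCoeff
    (hh : ∀ z : ℂ, ‖z‖ < 1 → HasSum (fun k => a k * z ^ k) (h z))
    (hg : ∀ z : ℂ, ‖z‖ < 1 → HasSum (fun k => b k * z ^ k) (g z))
    (hρ0 : 0 ≤ ρ) (hρ1 : ρ < 1) :
    Summable fun n => ‖harmonicCircleCoeff a b ρ n‖ := by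
  have hρ : ‖(ρ : ℂ)‖ < 1 := by rwa [norm_real, Real.norm_of_nonneg hρ0]
  refine .of_nat_of_neg_add_one ?_ ?_
  · simpa using summable_norm_iff.2 (hh ρ hρ).summable
  · refine ((summable_nat_add_iff 1).2 (summable_norm_iff.2 (hg ρ hρ).summable)).congr fun k => ?_
    simp only [harmonicCircleCoeff_neg_natCast_add_one, norm_mul, Complex.norm_conj]

theorem hasSum_harmonicCircleCoeff_mul_fourier
    (hh : ∀ z : ℂ, ‖z‖ < 1 → HasSum (fun k => a k * z ^ k) (h z))
    (hg : ∀ z : ℂ, ‖z‖ < 1 → HasSum (fun k => b k * z ^ k) (g z))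
    (hb0 : b 0 = 0) (hρ0 : 0 ≤ ρ) (hρ1 : ρ < 1) (x : ℝ) :
    HasSum (fun n => harmonicCircleCoeff a b ρ n * fourier n (x : AddCircle (2 * π)))
      (h (ρ * exp (x * I)) + conj (g (ρ * exp (x * I)))) := by
  set z : ℂ := ρ * exp (x * I)
  have hz : ‖z‖ < 1 := by rwa [norm_mul, norm_exp_ofReal_mul_I, mul_one, norm_real,
    Real.norm_of_nonneg hρ0]
  have hg' : HasSum (fun k : ℕ => b (k + 1) * z ^ (k + 1)) (g z) := by
    simpa [hb0] using (hasSum_nat_add_iff' 1).2 (hg z hz)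
  refine .of_nat_of_neg_add_one ?_ ?_
  · convert hh z hz using 2 with k
    simp only [harmonicCircleCoeff_natCast, fourier_coe_two_pi_apply, z,
      mul_pow, ← Complex.exp_nat_mul]
    push_cast
    ring_nf
  · convert (hg'.map (starRingEnd ℂ) continuous_conj) using 2 with k
    simp only [Function.comp_apply, harmonicCircleCoeff_neg_natCast_add_one,
      fourier_coe_two_pi_apply, z, map_mul, map_pow, map_natCast, conj_ofReal, ← exp_conj, conj_I,
      mul_pow, ← Complex.exp_nat_mul]
    push_cast
    ring_nf

theorem norm_sq_add_sum_range_norm_mul_pow_sq_le_one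
    (hh : ∀ z : ℂ, ‖z‖ < 1 → HasSum (fun k => a k * z ^ k) (h z))
    (hg : ∀ z : ℂ, ‖z‖ < 1 → HasSum (fun k => b k * z ^ k) (g z))
    (hb0 : b 0 = 0)
    (hbound : ∀ z : ℂ, ‖z‖ < 1 → ‖h z + conj (g z)‖ ≤ 1)
    (hρ0 : 0 ≤ ρ) (hρ1 : ρ < 1) (N : ℕ) :
    ‖a 0‖ ^ 2 + ∑ k ∈ range N,
      (‖a (k + 1) * ρ ^ (k + 1)‖ ^ 2 + ‖b (k + 1) * ρ ^ (k + 1)‖ ^ 2) ≤ 1 := by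
  have : Fact (0 < 2 * π) := ⟨by positivity⟩
  have hbound_circle (t : AddCircle (2 * π)) :
      ‖∑' n, harmonicCircleCoeff a b ρ n * fourier n t‖ ≤ 1 := by
    induction t using QuotientAddGroup.induction_on with
    | H x =>
      rw [(hasSum_harmonicCircleCoeff_mul_fourier hh hg hb0 hρ0 hρ1 x).tsum_eq]
      exact hbound _ (by simpa [norm_exp_ofReal_mul_I, abs_of_nonneg hρ0])
  have hintegral : ∫ t, ‖∑' n, harmonicCircleCoeff a b ρ n * fourier n t‖ ^ 2
      ∂(haarAddCircle (T := 2 * π)) ≤ 1 := by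
    calc _ ≤ ∫ _, (1 : ℝ) ∂(haarAddCircle (T := 2 * π)) :=
          integral_mono_of_nonneg (.of_forall fun _ => by positivity) (integrable_const 1)
            (.of_forall fun t => pow_le_one₀ (norm_nonneg _) (hbound_circle t))
      _ = 1 := by simp
  have hsum := (hasSum_sq_norm_of_summable_norm (T := 2 * π)
    (summable_norm_harmonicCircleCoeff hh hg hρ0 hρ1)).nat_add_neg
  have hpartial := sum_le_hasSum (range (N + 1)) (fun _ _ => by positivity) hsum
  have hc0 : harmonicCircleCoeff a b ρ 0 = a 0 := by
    change a 0 * (ρ : ℂ) ^ 0 = a 0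
    rw [pow_zero, mul_one]
  have hterm (k : ℕ) :
      ‖harmonicCircleCoeff a b ρ ↑(k + 1)‖ ^ 2 + ‖harmonicCircleCoeff a b ρ (-↑(k + 1))‖ ^ 2
        = ‖a (k + 1) * ρ ^ (k + 1)‖ ^ 2 + ‖b (k + 1) * ρ ^ (k + 1)‖ ^ 2 := by
    rw [harmonicCircleCoeff_natCast, Nat.cast_succ, harmonicCircleCoeff_neg_natCast_add_one,
      norm_mul, norm_mul, norm_mul, Complex.norm_conj]
  rw [sum_range_succ'] at hpartial
  simp only [hterm, Nat.cast_zero, neg_zero, hc0] at hpartial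
  linarith

theorem norm_sq_add_sum_range_norm_sq_le_one
    (hh : ∀ z : ℂ, ‖z‖ < 1 → HasSum (fun k => a k * z ^ k) (h z))
    (hg : ∀ z : ℂ, ‖z‖ < 1 → HasSum (fun k => b k * z ^ k) (g z))
    (hb0 : b 0 = 0)
    (hbound : ∀ z : ℂ, ‖z‖ < 1 → ‖h z + conj (g z)‖ ≤ 1)
    (N : ℕ) :
    ‖a 0‖ ^ 2 + ∑ k ∈ range N, (‖a (k + 1)‖ ^ 2 + ‖b (k + 1)‖ ^ 2) ≤ 1 := by
  let φ : ℝ → ℝ := fun ρ => ‖a 0‖ ^ 2 + ∑ k ∈ range N,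
    (‖a (k + 1) * (ρ : ℂ) ^ (k + 1)‖ ^ 2 + ‖b (k + 1) * (ρ : ℂ) ^ (k + 1)‖ ^ 2)
  have hclosed : IsClosed {ρ | φ ρ ≤ 1} := isClosed_le (by fun_prop) continuous_const
  have hIcc : Set.Icc (0 : ℝ) 1 ⊆ {ρ | φ ρ ≤ 1} := by
    rw [← closure_Ico zero_ne_one]
    exact hclosed.closure_subset_iff.2 fun ρ hρ =>
      norm_sq_add_sum_range_norm_mul_pow_sq_le_one hh hg hb0 hbound hρ.1 hρ.2 N
  simpa [φ] using hIcc (Set.right_mem_Icc.2 zero_le_one)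

end HarmonicDisk

theorem sq_rpow_add_rpow_one_div_le {x y p : ℝ} (hx : 0 ≤ x) (hy : 0 ≤ y) (hp : 2 ≤ p) :
    ((x ^ p + y ^ p) ^ (1 / p)) ^ 2 ≤ x ^ 2 + y ^ 2 := by
  have h := Real.rpow_add_rpow_le hx hy two_pos hp
  rw [← Real.sqrt_eq_rpow, Real.rpow_two, Real.rpow_two] at h
  calc ((x ^ p + y ^ p) ^ (1 / p)) ^ 2 ≤ √(x ^ 2 + y ^ 2) ^ 2 := by gcongr
    _ = x ^ 2 + y ^ 2 := Real.sq_sqrt (by positivity)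

theorem sq_rpow_add_rpow_one_div_le_two_rpow_mul {x y p : ℝ} (hx : 0 ≤ x) (hy : 0 ≤ y)
    (hp1 : 1 ≤ p) (hp2 : p ≤ 2) :
    ((x ^ p + y ^ p) ^ (1 / p)) ^ 2 ≤ 2 ^ (2 / p - 1) * (x ^ 2 + y ^ 2) := by
  have hp0 : 0 < p := by linarith
  have hrpow (z : ℝ) (hz : 0 ≤ z) : (z ^ p) ^ (2 / p) = z ^ 2 := by
    rw [← Real.rpow_mul hz, mul_div_cancel₀ _ hp0.ne', Real.rpow_two]
  calc ((x ^ p + y ^ p) ^ (1 / p)) ^ 2 = (x ^ p + y ^ p) ^ (2 / p) := by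
        rw [← Real.rpow_natCast, ← Real.rpow_mul (by positivity)]
        congr 1
        push_cast
        ring
    _ ≤ 2 ^ (2 / p - 1) * ((x ^ p) ^ (2 / p) + (y ^ p) ^ (2 / p)) := by
        have := NNReal.rpow_add_le_mul_rpow_add_rpow ⟨x ^ p, by positivity⟩ ⟨y ^ p, by positivity⟩
          ((one_le_div hp0).2 hp2)
        exact_mod_cast this
    _ = 2 ^ (2 / p - 1) * (x ^ 2 + y ^ 2) := by rw [hrpow x hx, hrpow y hy]

theorem tsum_mul_pow_succ_le_sqrt {M : ℕ → ℝ} {A r : ℝ} (hM : ∀ k, 0 ≤ M k)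
    (hMA : ∀ N, ∑ k ∈ range N, M k ^ 2 ≤ A) (hr0 : 0 ≤ r) (hr1 : r < 1) :
    ∑' k, M k * r ^ (k + 1) ≤ √(A * (r ^ 2 / (1 - r ^ 2))) := by
  have hr2 : r ^ 2 < 1 := by nlinarith
  refine Real.tsum_le_of_sum_range_le (fun k => by have := hM k; positivity) fun N => ?_
  have hgeom : ∑ k ∈ range N, (r ^ (k + 1)) ^ 2 ≤ r ^ 2 / (1 - r ^ 2) := by
    have := geom_sum_Ico_le_of_lt_one (m := 0) (n := N) (sq_nonneg r) hr2
    rw [pow_zero, ← range_eq_Ico] at this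
    calc ∑ k ∈ range N, (r ^ (k + 1)) ^ 2 = r ^ 2 * ∑ k ∈ range N, (r ^ 2) ^ k := by
          rw [mul_sum]; exact sum_congr rfl fun k _ => by ring
      _ ≤ r ^ 2 * (1 / (1 - r ^ 2)) := by gcongr
      _ = r ^ 2 / (1 - r ^ 2) := by ring
  calc ∑ k ∈ range N, M k * r ^ (k + 1)
      ≤ √(∑ k ∈ range N, M k ^ 2) * √(∑ k ∈ range N, (r ^ (k + 1)) ^ 2) :=
        Real.sum_mul_le_sqrt_mul_sqrt _ _ _
    _ = √((∑ k ∈ range N, M k ^ 2) * ∑ k ∈ range N, (r ^ (k + 1)) ^ 2) :=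
        (Real.sqrt_mul (sum_nonneg fun _ _ => sq_nonneg _) _).symm
    _ ≤ √(A * (r ^ 2 / (1 - r ^ 2))) := by
        gcongr
        · exact (sum_nonneg fun _ _ => sq_nonneg _).trans (hMA N)
        · exact hMA N

theorem add_tsum_mul_pow_succ_le_one {t u r : ℝ} {M Q : ℕ → ℝ} (ht : 0 ≤ t) (hu : 1 ≤ u)
    (hM : ∀ k, 0 ≤ M k) (hMQ : ∀ k, M k ^ 2 ≤ u * Q k)
    (hQ : ∀ N, t ^ 2 + ∑ k ∈ range N, Q k ≤ 1) (hr0 : 0 ≤ r)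
    (hr : r ≤ √((1 - t) / (u + 1 + (u - 1) * t))) :
    t + ∑' k, M k * r ^ (k + 1) ≤ 1 := by
  have ht1 : t ≤ 1 := by
    have := hQ 0
    rw [sum_range_zero, add_zero] at this
    nlinarith
  have hD : 2 ≤ u + 1 + (u - 1) * t := by nlinarith [mul_nonneg (sub_nonneg.2 hu) ht]
  have hr2 : r ^ 2 * (u + 1 + (u - 1) * t) ≤ 1 - t := by
    rwa [← le_div_iff₀ (by linarith), ← Real.le_sqrt hr0 (div_nonneg (by linarith) (by linarith))]
  have hr1 : r < 1 := by nlinarith [mul_le_mul_of_nonneg_left hD (sq_nonneg r)]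
  have hMsum (N : ℕ) : ∑ k ∈ range N, M k ^ 2 ≤ u * (1 - t ^ 2) :=
    calc ∑ k ∈ range N, M k ^ 2 ≤ ∑ k ∈ range N, u * Q k := sum_le_sum fun k _ => hMQ k
      _ = u * ∑ k ∈ range N, Q k := (mul_sum ..).symm
      _ ≤ u * (1 - t ^ 2) := by gcongr; linarith [hQ N]
  have hsqrt : √(u * (1 - t ^ 2) * (r ^ 2 / (1 - r ^ 2))) ≤ 1 - t := by
    refine Real.sqrt_le_iff.2 ⟨by linarith, ?_⟩
    rw [← mul_div_assoc, div_le_iff₀ (by nlinarith)]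
    nlinarith [mul_le_mul_of_nonneg_left hr2 (sub_nonneg.2 ht1)]
  linarith [tsum_mul_pow_succ_le_sqrt hM hMsum hr0 hr1]

theorem harmonic_p_bohr_with_constant_general
    (a b : ℕ → ℂ) (h g : ℂ → ℂ)
    (hh : ∀ z : ℂ, ‖z‖ < 1 → HasSum (fun k : ℕ => a k * z ^ k) (h z))
    (hg : ∀ z : ℂ, ‖z‖ < 1 → HasSum (fun k : ℕ => b k * z ^ k) (g z))
    (hb0 : b 0 = 0)
    (hbound : ∀ z : ℂ, ‖z‖ < 1 → ‖h z + (starRingEnd ℂ) (g z)‖ ≤ 1) :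
    (∀ p : ℝ, 1 ≤ p → p ≤ 2 → ∀ r : ℝ, 0 ≤ r →
      r ≤ Real.sqrt ((1 - ‖a 0‖) /
            ((2 : ℝ) ^ (2 / p - 1) + 1 + ((2 : ℝ) ^ (2 / p - 1) - 1) * ‖a 0‖)) →
      ‖a 0‖ + (∑' k : ℕ, (‖a (k + 1)‖ ^ p + ‖b (k + 1)‖ ^ p) ^ (1 / p) * r ^ (k + 1))
        ≤ 1) ∧
    (∀ p : ℝ, 2 ≤ p → ∀ r : ℝ, 0 ≤ r → r ≤ Real.sqrt ((1 - ‖a 0‖) / 2) →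
      ‖a 0‖ + (∑' k : ℕ, (‖a (k + 1)‖ ^ p + ‖b (k + 1)‖ ^ p) ^ (1 / p) * r ^ (k + 1))
        ≤ 1) := by
  have hparseval := norm_sq_add_sum_range_norm_sq_le_one hh hg hb0 hbound
  refine ⟨fun p hp1 hp2 r hr0 hr => ?_, fun p hp r hr0 hr => ?_⟩
  · have hu : (1 : ℝ) ≤ 2 ^ (2 / p - 1) :=
      Real.one_le_rpow one_le_two (sub_nonneg.2 ((one_le_div (by linarith)).2 hp2))
    exact add_tsum_mul_pow_succ_le_one (norm_nonneg _) hu (fun k => by positivity)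
      (fun k => sq_rpow_add_rpow_one_div_le_two_rpow_mul (norm_nonneg _) (norm_nonneg _) hp1 hp2)
      hparseval hr0 hr
  · refine add_tsum_mul_pow_succ_le_one (norm_nonneg _) le_rfl (fun k => by positivity)
      (fun k => ?_) hparseval hr0 (by rwa [sub_self, zero_mul, add_zero, one_add_one_eq_two])
    rw [one_mul]
    exact sq_rpow_add_rpow_one_div_le (norm_nonneg _) (norm_nonneg _) hp

/-- Corollary 4 of Kayumov–Ponnusamy: `p`-Bohr-type inequality with the constant
term for bounded harmonic mappings `f = h + conj g` with `g(0) = 0`. -/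
theorem harmonic_p_bohr_with_constant
    (a b : ℕ → ℂ) (h g : ℂ → ℂ)
    (hh : ∀ z : ℂ, ‖z‖ < 1 → HasSum (fun k : ℕ => a k * z ^ k) (h z))
    (hg : ∀ z : ℂ, ‖z‖ < 1 → HasSum (fun k : ℕ => b k * z ^ k) (g z))
    (hb0 : b 0 = 0)
    (hbound : ∀ z : ℂ, ‖z‖ < 1 → ‖h z + (starRingEnd ℂ) (g z)‖ ≤ 1)
    (ha0 : ‖a 0‖ < 1) :
    (∀ p : ℝ, 1 ≤ p → p ≤ 2 → ∀ r : ℝ, 0 ≤ r →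
      r ≤ Real.sqrt ((1 - ‖a 0‖) /
            ((2 : ℝ) ^ (2 / p - 1) + 1 + ((2 : ℝ) ^ (2 / p - 1) - 1) * ‖a 0‖)) →
      ‖a 0‖ + (∑' k : ℕ, (‖a (k + 1)‖ ^ p + ‖b (k + 1)‖ ^ p) ^ (1 / p) * r ^ (k + 1))
        ≤ 1) ∧
    (∀ p : ℝ, 2 ≤ p → ∀ r : ℝ, 0 ≤ r → r ≤ Real.sqrt ((1 - ‖a 0‖) / 2) →
      ‖a 0‖ + (∑' k : ℕ, (‖a (k + 1)‖ ^ p + ‖b (k + 1)‖ ^ p) ^ (1 / p) * r ^ (k + 1))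
        ≤ 1) :=
  harmonic_p_bohr_with_constant_general a b h g hh hg hb0 hbound
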